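/- Consider any finite MDP in which every deterministic stationary policy π induces a Markov chain P_π with a unique stationary distribution ν_π and finite mixing time τ_π, and let τ_unif := sup over deterministic stationary policies π of τ_π be finite. Then the bounded transient time property holds with parameter at most 4·τ_unif; that is, for every deterministic stationary policy π and every state s, E_s^π[T_{R^π}] ≤ 4·τ_unif. -/

import Mathlib

/-!
From a recurrent state no transient state is reachable, so its row of `P_π^τ` puts no mass on
the transient states. If every row of `P_π^τ` is within `1/2` of `ν_π` in `ℓ¹`, any two rows are
within `1` of each other, so from every state the probability of still being transient at time `τ`
is at most `1/2`. Since the recurrent states form a closed set, this probability is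
submultiplicative over blocks of length `τ`; it is thus at most `2⁻ᵏ` on the `k`-th block, and
`E_s^π[T_{R^π}] ≤ 2τ ≤ 4 τ_unif`.
-/

open Filter Matrix MeasureTheory
open scoped BigOperators ENNReal

namespace PaperMDP

variable {S A : Type*}

section Core

variable [Fintype S] [Fintype A] [DecidableEq S] [Nonempty S] [Nonempty A]

/-- `p` is a transition probability kernel on `S × A`. -/
def IsKernel (p : S → A → S → ℝ) : Prop :=
  ∀ s a, (∀ s', 0 ≤ p s a s') ∧ (∑ s', p s a s') = 1

/-- `pol` is a stationary Markov (randomized) policy. -/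
def IsPolicy (pol : S → A → ℝ) : Prop :=
  ∀ s, (∀ a, 0 ≤ pol s a) ∧ (∑ a, pol s a) = 1

/-- Transition matrix `P_π` induced by a policy. -/
def polMat (p : S → A → S → ℝ) (pol : S → A → ℝ) : Matrix S S ℝ :=
  Matrix.of fun s s' => ∑ a, pol s a * p s a s'

/-- Reward vector `r_π` induced by a policy. -/
def polRew (r : S → A → ℝ) (pol : S → A → ℝ) : S → ℝ := fun s => ∑ a, pol s a * r s a

/-- The deterministic policy induced by `d : S → A`, viewed as a randomized policy. -/
def detPol [DecidableEq A] (d : S → A) : S → A → ℝ := fun s a => if a = d s then 1 else 0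

/-- `(I - γ M)⁻¹ v = ∑_{t ≥ 0} γ^t M^t v` (Neumann series). -/
noncomputable def resApply (γ : ℝ) (M : Matrix S S ℝ) (v : S → ℝ) : S → ℝ :=
  ∑' t : ℕ, γ ^ t • (M ^ t *ᵥ v)

/-- Discounted value function `V_γ^π`. -/
noncomputable def dval (p : S → A → S → ℝ) (r : S → A → ℝ) (γ : ℝ) (pol : S → A → ℝ) :
    S → ℝ :=
  resApply γ (polMat p pol) (polRew r pol)

/-- Optimal discounted value function `V_γ^*`. -/
noncomputable def dvalStar (p : S → A → S → ℝ) (r : S → A → ℝ) (γ : ℝ) : S → ℝ := fun s =>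
  ⨆ q : {q : S → A → ℝ // IsPolicy q}, dval p r γ q.1 s

/-- `pol` is an optimal policy for the `γ`-discounted MDP `(p, r, γ)`. -/
def DiscountedOptimal (p : S → A → S → ℝ) (r : S → A → ℝ) (γ : ℝ) (pol : S → A → ℝ) :
    Prop :=
  IsPolicy pol ∧ ∀ q : S → A → ℝ, IsPolicy q → ∀ s, dval p r γ q s ≤ dval p r γ pol s

/-- Cesàro limit of a sequence of vectors. -/
noncomputable def cesaro (f : ℕ → S → ℝ) : S → ℝ :=
  limUnder atTop fun N : ℕ => (N : ℝ)⁻¹ • ∑ T ∈ Finset.range N, f T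

/-- The gain (long-run average reward) `ρ^π`. -/
noncomputable def gain (p : S → A → S → ℝ) (r : S → A → ℝ) (pol : S → A → ℝ) : S → ℝ :=
  cesaro fun t => (polMat p pol ^ t) *ᵥ polRew r pol

/-- The bias function `h^π`. -/
noncomputable def bias (p : S → A → S → ℝ) (r : S → A → ℝ) (pol : S → A → ℝ) : S → ℝ :=
  cesaro fun T => ∑ t ∈ Finset.range T, ((polMat p pol ^ t) *ᵥ polRew r pol - gain p r pol)

/-- Blackwell optimality of a policy. -/
def Blackwell (p : S → A → S → ℝ) (r : S → A → ℝ) (pol : S → A → ℝ) : Prop :=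
  IsPolicy pol ∧ ∃ γ₀ ∈ Set.Ioo (0 : ℝ) 1, ∀ γ ∈ Set.Ico γ₀ 1,
    ∀ q : S → A → ℝ, IsPolicy q → ∀ s, dval p r γ q s ≤ dval p r γ pol s

/-- The optimal gain `ρ^*(s) = sup_π ρ^π(s)`. -/
noncomputable def gainStar (p : S → A → S → ℝ) (r : S → A → ℝ) : S → ℝ := fun s =>
  ⨆ q : {q : S → A → ℝ // IsPolicy q}, gain p r q.1 s

/-- Span seminorm `sp(v) = max v - min v`. -/
noncomputable def span (v : S → ℝ) : ℝ := (⨆ s, v s) - (⨅ s, v s)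

/-- `s'` is reachable from `s` in the Markov chain with transition matrix `M`. -/
def Reaches (M : Matrix S S ℝ) (s s' : S) : Prop := ∃ t : ℕ, 0 < (M ^ t) s s'

/-- A state of a finite Markov chain is recurrent iff its communicating class is closed. -/
def Recurrent (M : Matrix S S ℝ) (s : S) : Prop := ∀ s', Reaches M s s' → Reaches M s' s

/-- Weakly communicating MDP. -/
def WeaklyCommunicating (p : S → A → S → ℝ) : Prop :=
  ∃ S1 : Set S,
    (∀ s ∈ S1, ∀ pol : S → A → ℝ, IsPolicy pol → ¬Recurrent (polMat p pol) s) ∧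
    ∀ s ∉ S1, ∀ s' ∉ S1, ∃ pol : S → A → ℝ, IsPolicy pol ∧ Reaches (polMat p pol) s s'

/-- The probability that the chain `M` started at `s` is in a transient state at time `t`.
For a finite chain, `E_s[T_{R}] = ∑_{t} transientMass M s t`, since the set of recurrent
states is closed. -/
noncomputable def transientMass (M : Matrix S S ℝ) (s : S) (t : ℕ) : ℝ :=
  ∑ s', Set.indicator {x : S | ¬Recurrent M x} (fun x => (M ^ t) s x) s'

/-- The bounded transient time property with parameter `B`:
`E_s^π[T_{R^π}] ≤ B` for every deterministic stationary policy and every state. -/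
def BoundedTransientTime [DecidableEq A] (p : S → A → S → ℝ) (B : ℝ) : Prop :=
  ∀ (d : S → A) (s : S) (n : ℕ),
    (∑ t ∈ Finset.range n, transientMass (polMat p (detPol d)) s t) ≤ B

/-- One-step variance vector `𝕍_{P}[V]`. -/
noncomputable def oneStepVar (M : Matrix S S ℝ) (V : S → ℝ) : S → ℝ := fun s =>
  ∑ s', M s s' * (V s' - (M *ᵥ V) s) ^ 2

/-- Probability of the path `(S_0, …, S_T) = path` for the chain `M` started at `s`. -/
noncomputable def pathProb (M : Matrix S S ℝ) (s : S) {T : ℕ} (path : Fin (T + 1) → S) : ℝ :=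
  (if path 0 = s then 1 else 0) * ∏ i : Fin T, M (path i.castSucc) (path i.succ)

/-- Expectation of a function of `(S_0, …, S_T)` for the chain `M` started at `s`. -/
noncomputable def pathExp (M : Matrix S S ℝ) (s : S) (T : ℕ) (f : (Fin (T + 1) → S) → ℝ) :
    ℝ :=
  ∑ path : Fin (T + 1) → S, pathProb M s path * f path

/-- Variance of a function of `(S_0, …, S_T)` for the chain `M` started at `s`. -/
noncomputable def pathVar (M : Matrix S S ℝ) (s : S) (T : ℕ) (f : (Fin (T + 1) → S) → ℝ) :
    ℝ :=
  pathExp M s T fun path => (f path - pathExp M s T f) ^ 2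

/-- Variance of the infinite-horizon discounted return, `𝕍_s^π[∑_{t} γ^t R_t]`,
as the limit of the variances of the truncated returns. -/
noncomputable def returnVar (M : Matrix S S ℝ) (rv : S → ℝ) (γ : ℝ) : S → ℝ := fun s =>
  limUnder atTop fun T : ℕ =>
    pathVar M s T fun path => ∑ t : Fin (T + 1), γ ^ (t : ℕ) * rv (path t)

end Core

open Finset in
lemma sum_le_half_sum_abs_of_sum_eq_zero [Fintype S] [DecidableEq S] (f : S → ℝ) (T : Finset S)
    (hf : ∑ x, f x = 0) : ∑ x ∈ T, f x ≤ (∑ x, |f x|) / 2 := by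
  have hpos : ∑ x ∈ T, f x ≤ ∑ x ∈ T, |f x| := sum_le_sum fun x _ => le_abs_self _
  have hneg : -∑ x ∈ Tᶜ, f x ≤ ∑ x ∈ Tᶜ, |f x| := by
    rw [← sum_neg_distrib]; exact sum_le_sum fun x _ => neg_le_abs _
  have := sum_add_sum_compl T f
  have := sum_add_sum_compl T fun x => |f x|
  linarith

open Finset in
lemma sum_range_mul_le_of_le_geometric {f : ℕ → ℝ} {τ : ℕ} {q : ℝ} (hq₀ : 0 ≤ q) (hq₁ : q < 1)
    (hf : ∀ k j, f (k * τ + j) ≤ q ^ k) (n : ℕ) :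
    ∑ i ∈ range (n * τ), f i ≤ τ / (1 - q) := by
  have hblocks : ∑ i ∈ range (n * τ), f i
      = ∑ k ∈ range n, ∑ j ∈ range τ, f (k * τ + j) := by
    induction n with
    | zero => simp
    | succ n ih => rw [add_one_mul, sum_range_add, ih, sum_range_succ]
  calc ∑ i ∈ range (n * τ), f i
      ≤ ∑ k ∈ range n, τ * q ^ k := by
        rw [hblocks]
        exact sum_le_sum fun k _ => (sum_le_sum fun j _ => hf k j).trans_eq
          (by rw [sum_const, card_range, nsmul_eq_mul])
    _ = τ * ∑ k ∈ Ico 0 n, q ^ k := by rw [mul_sum, range_eq_Ico]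
    _ ≤ τ * (q ^ 0 / (1 - q)) := by gcongr; exact geom_sum_Ico_le_of_lt_one hq₀ hq₁
    _ = τ / (1 - q) := by rw [pow_zero, mul_one_div]

section MarkovChain

open Finset
open scoped Classical

variable [Fintype S] [DecidableEq S] {M : Matrix S S ℝ}

lemma reaches_refl (M : Matrix S S ℝ) (s : S) : Reaches M s s :=
  ⟨0, by simp⟩

lemma pow_apply_nonneg (hM : M ∈ rowStochastic ℝ S) (t : ℕ) (s s' : S) : 0 ≤ (M ^ t) s s' :=
  nonneg_of_mem_rowStochastic (pow_mem hM t)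

lemma Reaches.trans (hM : M ∈ rowStochastic ℝ S) {s s' s'' : S}
    (h₁ : Reaches M s s') (h₂ : Reaches M s' s'') : Reaches M s s'' := by
  obtain ⟨a, ha⟩ := h₁
  obtain ⟨b, hb⟩ := h₂
  refine ⟨a + b, (mul_pos ha hb).trans_le ?_⟩
  rw [pow_add, Matrix.mul_apply]
  exact single_le_sum (f := fun y => (M ^ a) s y * (M ^ b) y s'')
    (fun y _ => mul_nonneg (pow_apply_nonneg hM a s y) (pow_apply_nonneg hM b y s''))
    (mem_univ s')

lemma Recurrent.of_reaches (hM : M ∈ rowStochastic ℝ S) {s s' : S}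
    (hs : Recurrent M s) (h : Reaches M s s') : Recurrent M s' :=
  fun x hx => (hs x (h.trans hM hx)).trans hM h

/-- A state whose set of reachable states has minimal cardinality is recurrent. -/
lemma exists_recurrent [Nonempty S] (hM : M ∈ rowStochastic ℝ S) : ∃ s, Recurrent M s := by
  obtain ⟨s₀, -, hmin⟩ :=
    exists_min_image univ (fun s => #(univ.filter (Reaches M s))) univ_nonempty
  refine ⟨s₀, fun s h => by_contra fun hback => ?_⟩
  have hsub : univ.filter (Reaches M s) ⊂ univ.filter (Reaches M s₀) := by
    refine Finset.ssubset_iff_subset_ne.2 ⟨fun x hx => ?_, fun heq => hback ?_⟩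
    · simp only [mem_filter, mem_univ, true_and] at hx ⊢
      exact h.trans hM hx
    · exact (mem_filter.1 (heq ▸ mem_filter.2 ⟨mem_univ s₀, reaches_refl M s₀⟩)).2
  exact (hmin s (mem_univ s)).not_gt (card_lt_card hsub)

lemma pow_apply_eq_zero_of_recurrent (hM : M ∈ rowStochastic ℝ S) {y x : S}
    (hy : Recurrent M y) (hx : ¬Recurrent M x) (t : ℕ) : (M ^ t) y x = 0 :=
  by_contra fun h => hx (hy.of_reaches hM
    ⟨t, (pow_apply_nonneg hM t y x).lt_of_ne' h⟩)

lemma transientMass_eq_sum_filter (M : Matrix S S ℝ) (s : S) (t : ℕ) :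
    transientMass M s t = ∑ x with ¬Recurrent M x, (M ^ t) s x := by
  rw [transientMass, sum_filter]
  exact sum_congr rfl fun x _ => Set.indicator_apply _ _ _

lemma transientMass_nonneg (hM : M ∈ rowStochastic ℝ S) (s : S) (t : ℕ) :
    0 ≤ transientMass M s t := by
  rw [transientMass_eq_sum_filter]
  exact sum_nonneg fun x _ => pow_apply_nonneg hM t s x

lemma transientMass_le_one (hM : M ∈ rowStochastic ℝ S) (s : S) (t : ℕ) :
    transientMass M s t ≤ 1 := by
  rw [transientMass_eq_sum_filter, ← sum_row_of_mem_rowStochastic (pow_mem hM t) s]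
  exact sum_le_sum_of_subset_of_nonneg (filter_subset _ _)
    fun x _ _ => pow_apply_nonneg hM t s x

lemma transientMass_of_recurrent (hM : M ∈ rowStochastic ℝ S) {y : S} (hy : Recurrent M y)
    (t : ℕ) : transientMass M y t = 0 := by
  rw [transientMass_eq_sum_filter]
  exact sum_eq_zero fun x hx => pow_apply_eq_zero_of_recurrent hM hy (mem_filter.1 hx).2 t

lemma transientMass_add (M : Matrix S S ℝ) (s : S) (t u : ℕ) :
    transientMass M s (t + u) = ∑ y, (M ^ t) s y * transientMass M y u := by
  simp only [transientMass_eq_sum_filter, pow_add, Matrix.mul_apply, mul_sum]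
  exact sum_comm

/-- Only transient states at time `t` can contribute transient mass at time `t + u`. -/
lemma transientMass_add_le (hM : M ∈ rowStochastic ℝ S) (s : S) (t u : ℕ) {c : ℝ}
    (hc : ∀ y, transientMass M y u ≤ c) :
    transientMass M s (t + u) ≤ c * transientMass M s t := by
  rw [transientMass_add, ← sum_filter_not_add_sum_filter _ (Recurrent M ·),
    transientMass_eq_sum_filter, mul_sum]
  have hrec : ∑ y with Recurrent M y, (M ^ t) s y * transientMass M y u = 0 :=
    sum_eq_zero fun y hy => by rw [transientMass_of_recurrent hM (mem_filter.1 hy).2, mul_zero]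
  rw [hrec, add_zero]
  exact sum_le_sum fun y _ => by
    rw [mul_comm c]
    exact mul_le_mul_of_nonneg_left (hc y) (pow_apply_nonneg hM t s y)

lemma transientMass_le_pow (hM : M ∈ rowStochastic ℝ S) {τ : ℕ} {q : ℝ}
    (hq : ∀ y, transientMass M y τ ≤ q) (s : S) (k j : ℕ) :
    transientMass M s (k * τ + j) ≤ q ^ k := by
  have hq0 : 0 ≤ q := (transientMass_nonneg hM s τ).trans (hq s)
  have hblock : transientMass M s (k * τ) ≤ q ^ k := by
    induction k with
    | zero => simpa using transientMass_le_one hM s 0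
    | succ k ih =>
      calc transientMass M s ((k + 1) * τ) ≤ q * transientMass M s (k * τ) := by
            rw [add_one_mul]; exact transientMass_add_le hM s _ τ hq
        _ ≤ q ^ (k + 1) := by rw [pow_succ']; gcongr
  calc transientMass M s (k * τ + j) ≤ 1 * transientMass M s (k * τ) :=
        transientMass_add_le hM s _ j (transientMass_le_one hM · j)
    _ ≤ q ^ k := by rwa [one_mul]

/-- Compare with a recurrent state `s₀`, which carries no transient mass: the transient mass at
`y` is at most the total variation distance between the rows of `y` and `s₀`. -/
lemma transientMass_le_of_forall_sum_abs_sub_le (hM : M ∈ rowStochastic ℝ S) (ν : S → ℝ)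
    {τ : ℕ} {ε : ℝ} (hmix : ∀ s, ∑ s', |(M ^ τ) s s' - ν s'| ≤ ε) (y : S) :
    transientMass M y τ ≤ ε := by
  have : Nonempty S := ⟨y⟩
  obtain ⟨s₀, hs₀⟩ := exists_recurrent hM
  have hrows : ∑ x, ((M ^ τ) y x - (M ^ τ) s₀ x) = 0 := by
    rw [sum_sub_distrib, sum_row_of_mem_rowStochastic (pow_mem hM τ),
      sum_row_of_mem_rowStochastic (pow_mem hM τ), sub_self]
  have htriangle : ∑ x, |(M ^ τ) y x - (M ^ τ) s₀ x| ≤ ε + ε := by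
    calc ∑ x, |(M ^ τ) y x - (M ^ τ) s₀ x|
        ≤ ∑ x, (|(M ^ τ) y x - ν x| + |(M ^ τ) s₀ x - ν x|) :=
          sum_le_sum fun x _ => (abs_sub_le _ (ν x) _).trans_eq (by rw [abs_sub_comm (ν x)])
      _ ≤ ε + ε := by rw [sum_add_distrib]; exact add_le_add (hmix y) (hmix s₀)
  calc transientMass M y τ = transientMass M y τ - transientMass M s₀ τ := by
        rw [transientMass_of_recurrent hM hs₀, sub_zero]
    _ = ∑ x with ¬Recurrent M x, ((M ^ τ) y x - (M ^ τ) s₀ x) := by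
        simp only [transientMass_eq_sum_filter, sum_sub_distrib]
    _ ≤ (ε + ε) / 2 := (sum_le_half_sum_abs_of_sum_eq_zero _ _ hrows).trans (by gcongr)
    _ = ε := by ring

end MarkovChain

lemma polMat_detPol_apply [Fintype A] [DecidableEq A] (p : S → A → S → ℝ) (d : S → A)
    (s s' : S) : polMat p (detPol d) s s' = p s (d s) s' := by
  simp [polMat, detPol]

lemma IsKernel.polMat_detPol_mem_rowStochastic [Fintype S] [DecidableEq S] [Fintype A]
    [DecidableEq A] {p : S → A → S → ℝ} (hp : IsKernel p) (d : S → A) :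
    polMat p (detPol d) ∈ rowStochastic ℝ S := by
  simp only [mem_rowStochastic_iff_sum, polMat_detPol_apply]
  exact ⟨fun s => (hp s (d s)).1, fun s => (hp s (d s)).2⟩

theorem stmt19_general {S A : Type*} [Fintype S] [Fintype A] [DecidableEq S] [DecidableEq A]
    (p : S → A → S → ℝ) (hp : IsKernel p)
    (ν : (S → A) → S → ℝ)
    (τunif : ℕ)
    (hmix : ∀ d : S → A, ∃ t : ℕ, 1 ≤ t ∧ t ≤ τunif ∧
      ∀ s, (∑ s', |(polMat p (detPol d) ^ t) s s' - ν d s'|) ≤ 1 / 2) :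
    BoundedTransientTime p (4 * (τunif : ℝ)) := by
  intro d s n
  have hM := hp.polMat_detPol_mem_rowStochastic d
  obtain ⟨τ, hτ₁, hτ, hmixτ⟩ := hmix d
  have hhalf := transientMass_le_of_forall_sum_abs_sub_le hM (ν d) hmixτ
  calc ∑ t ∈ Finset.range n, transientMass (polMat p (detPol d)) s t
      ≤ ∑ t ∈ Finset.range (n * τ), transientMass (polMat p (detPol d)) s t :=
        Finset.sum_le_sum_of_subset_of_nonneg
          (Finset.range_subset_range.2 (Nat.le_mul_of_pos_right n hτ₁))
          fun t _ _ => transientMass_nonneg hM s t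
    _ ≤ τ / (1 - 1 / 2) := sum_range_mul_le_of_le_geometric (by norm_num) (by norm_num)
        (transientMass_le_pow hM hhalf s) n
    _ = 2 * τ := by ring
    _ ≤ 4 * τunif := by
        have : (τ : ℝ) ≤ τunif := by exact_mod_cast hτ
        linarith

/-- In any finite MDP in which every deterministic stationary policy `d`
induces a Markov chain with a unique stationary distribution `ν d` and with a finite mixing
time bounded by `τunif`, the bounded transient time property holds with parameter `4·τunif`. -/
theorem stmt19 {S A : Type*} [Fintype S] [Fintype A] [DecidableEq S] [DecidableEq A]
    [Nonempty S] [Nonempty A]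
    (p : S → A → S → ℝ) (hp : IsKernel p)
    (ν : (S → A) → S → ℝ)
    (hstat : ∀ d : S → A, (∀ s, 0 ≤ ν d s) ∧ (∑ s, ν d s) = 1 ∧
      ν d ᵥ* polMat p (detPol d) = ν d)
    (huniq : ∀ (d : S → A) (μ : S → ℝ),
      (∀ s, 0 ≤ μ s) → (∑ s, μ s) = 1 → μ ᵥ* polMat p (detPol d) = μ → μ = ν d)
    (τunif : ℕ)
    (hmix : ∀ d : S → A, ∃ t : ℕ, 1 ≤ t ∧ t ≤ τunif ∧
      ∀ s, (∑ s', |(polMat p (detPol d) ^ t) s s' - ν d s'|) ≤ 1 / 2) :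
    BoundedTransientTime p (4 * (τunif : ℝ)) :=
  stmt19_general p hp ν τunif hmix

end PaperMDP
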